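/- arXiv:2605.05710 — 6 statements merged into one kernel-verified Lean document; each statement's English description precedes it below -/
import Mathlib

section
/- Let f : ℝ → ℝ be three times differentiable with |f'(x)| ≤ M₁, |f''(x)| ≤ M₂ and |f'''(x)| ≤ M₃ for all x ∈ ℝ. Define H(z, z⋆) := f'(z)² + (f(z) − f(z⋆))·f''(z). Then for all z, z⋆ ∈ ℝ: |H(z, z⋆) − f'(z⋆)²| ≤ 3·M₁·M₂·|z − z⋆| + (1/2)·M₁·M₃·(z − z⋆)². -/
lemma lip_of_deriv_bound (g : ℝ → ℝ) (M : ℝ) (hg : Differentiable ℝ g)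
    (hM : ∀ x, |deriv g x| ≤ M) (a b : ℝ) : |g a - g b| ≤ M * |a - b| := by
  have := Convex.norm_image_sub_le_of_norm_deriv_le (f := g) (s := Set.univ)
    (fun x _ => hg x)
    (fun x _ => by simpa using hM x) convex_univ (Set.mem_univ b) (Set.mem_univ a)
  simpa [Real.norm_eq_abs] using this

/-- Lipschitz-type bound on the scalar Hessian functional
`H(z, z⋆) = f'(z)² + (f(z) − f(z⋆)) f''(z)` of the squared-loss single-index model:
`|H(z, z⋆) − f'(z⋆)²| ≤ 3 M₁ M₂ |z − z⋆| + (1/2) M₁ M₃ (z − z⋆)²`. -/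
theorem stmt4 (f : ℝ → ℝ) (M₁ M₂ M₃ : ℝ)
    (h1 : Differentiable ℝ f) (h2 : Differentiable ℝ (deriv f))
    (h3 : Differentiable ℝ (deriv (deriv f)))
    (hM₁ : ∀ x, |deriv f x| ≤ M₁) (hM₂ : ∀ x, |deriv (deriv f) x| ≤ M₂)
    (hM₃ : ∀ x, |deriv (deriv (deriv f)) x| ≤ M₃)
    (z zs : ℝ) :
    |((deriv f z) ^ 2 + (f z - f zs) * deriv (deriv f) z) - (deriv f zs) ^ 2| ≤
      3 * M₁ * M₂ * |z - zs| + (1 / 2) * M₁ * M₃ * (z - zs) ^ 2 := by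
  have hM₁0 : 0 ≤ M₁ := le_trans (abs_nonneg _) (hM₁ 0)
  have hM₃0 : 0 ≤ M₃ := le_trans (abs_nonneg _) (hM₃ 0)
  have key : |((deriv f z) ^ 2 + (f z - f zs) * deriv (deriv f) z) - (deriv f zs) ^ 2| ≤
      3 * M₁ * M₂ * |z - zs| := by
    have e : ((deriv f z) ^ 2 + (f z - f zs) * deriv (deriv f) z) - (deriv f zs) ^ 2
        = (deriv f z - deriv f zs) * (deriv f z + deriv f zs)
          + (f z - f zs) * deriv (deriv f) z := by ring
    rw [e]
    calc |(deriv f z - deriv f zs) * (deriv f z + deriv f zs)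
          + (f z - f zs) * deriv (deriv f) z|
        ≤ |deriv f z - deriv f zs| * |deriv f z + deriv f zs|
          + |f z - f zs| * |deriv (deriv f) z| := by
          refine le_trans (abs_add_le _ _) ?_
          rw [abs_mul, abs_mul]
      _ ≤ (M₂ * |z - zs|) * (M₁ + M₁) + (M₁ * |z - zs|) * M₂ := by
          have b1 := lip_of_deriv_bound _ _ h2 hM₂ z zs
          have b2 : |deriv f z + deriv f zs| ≤ M₁ + M₁ :=
            le_trans (abs_add_le _ _) (add_le_add (hM₁ z) (hM₁ zs))
          have b3 := lip_of_deriv_bound _ _ h1 hM₁ z zs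
          have b4 := hM₂ z
          have := abs_nonneg (deriv f z - deriv f zs)
          have := abs_nonneg (deriv f z + deriv f zs)
          have := abs_nonneg (f z - f zs)
          have := abs_nonneg (deriv (deriv f) z)
          nlinarith
      _ = 3 * M₁ * M₂ * |z - zs| := by ring
  have : 0 ≤ (1 / 2) * M₁ * M₃ * (z - zs) ^ 2 := by positivity
  linarith
end

section
/- Let λ ≥ 0, let v ∈ ℝ^d be a unit vector, set Σ = I_d + λ v vᵀ, and let x ~ N(0, Σ). Let w, v_weak ∈ ℝ^d be unit vectors and let f : ℝ → ℝ be differentiable with |f'(x)| ≤ M₁ for all x. Define g := (f(⟨w, x⟩) − f(⟨v_weak, x⟩))·f'(⟨w, x⟩)·x. Then E[‖g‖²] ≤ M₁⁴·( 4d(1+λ) + 4λ(1+λ) + 8(1+λ)² ). -/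
/-!
By the mean value theorem the integrand is at most `M₁⁴ ⟨u, x⟩² ‖x‖²` with `u = w - v_weak`,
`‖u‖² ≤ 4`. Writing `‖x‖² = ∑ᵢ ⟨eᵢ, x⟩²`, everything reduces to Isserlis' identity
`E[⟨a, x⟩² ⟨b, x⟩²] = (aᵀΣa)(bᵀΣb) + 2 (aᵀΣb)²`. Since the Gaussian vector is only described
through its one-dimensional marginals, this identity is obtained by polarization from the fourth
moments `E⟨a, x⟩⁴ = 3 (aᵀΣa)²`, which are the fourth derivative at `0` of the moment generating
function `t ↦ exp (aᵀΣa t² / 2)`. Summing over `i` gives `E[⟨u, x⟩² ‖x‖²] = (uᵀΣu) tr Σ + 2 ‖Σu‖²`,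
and for the spiked covariance `uᵀΣu ≤ (1 + λ) ‖u‖²`, `‖Σu‖² ≤ (1 + λ)² ‖u‖²`, `tr Σ = d + λ`.
-/

open MeasureTheory ProbabilityTheory Matrix

/-- `X` is a centered Gaussian random vector with covariance matrix `S`:
by the Cramér–Wold device, this holds iff every linear functional `⟨u, X⟩` has the
one-dimensional centered Gaussian law with variance `uᵀ S u`. -/
def IsCenteredGaussianVec {Ω : Type*} [MeasurableSpace Ω] (P : Measure Ω) {d : ℕ}
    (S : Matrix (Fin d) (Fin d) ℝ) (X : Ω → Fin d → ℝ) : Prop :=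
  Measurable X ∧
    ∀ u : Fin d → ℝ, Measure.map (fun ω => u ⬝ᵥ X ω) P =
      gaussianReal 0 (Real.toNNReal (u ⬝ᵥ S.mulVec u))

open scoped NNReal

lemma iteratedDeriv_four_exp_mul_sq_div_two (s : ℝ) :
    iteratedDeriv 4 (fun t => Real.exp (s * t ^ 2 / 2)) 0 = 3 * s ^ 2 := by
  have hE (t : ℝ) :
      HasDerivAt (fun t => Real.exp (s * t ^ 2 / 2)) (s * t * Real.exp (s * t ^ 2 / 2)) t :=
    ((hasDerivAt_pow 2 t).const_mul s |>.div_const 2).exp.congr_deriv (by ring)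
  have hmul {p : ℝ → ℝ} {p' t : ℝ} (hp : HasDerivAt p p' t) :
      HasDerivAt (fun t => p t * Real.exp (s * t ^ 2 / 2))
        ((p' + s * t * p t) * Real.exp (s * t ^ 2 / 2)) t :=
    (hp.mul (hE t)).congr_deriv (by ring)
  have d1 :
      deriv (fun t => Real.exp (s * t ^ 2 / 2)) = fun t => s * t * Real.exp (s * t ^ 2 / 2) :=
    funext fun t => (hE t).deriv
  have d2 : deriv (fun t => s * t * Real.exp (s * t ^ 2 / 2)) =
      fun t => (s + s ^ 2 * t ^ 2) * Real.exp (s * t ^ 2 / 2) := funext fun t => by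
    rw [(hmul ((hasDerivAt_id' t).const_mul s)).deriv]; ring
  have d3 : deriv (fun t => (s + s ^ 2 * t ^ 2) * Real.exp (s * t ^ 2 / 2)) =
      fun t => (3 * s ^ 2 * t + s ^ 3 * t ^ 3) * Real.exp (s * t ^ 2 / 2) := funext fun t => by
    rw [(hmul (((hasDerivAt_pow 2 t).const_mul (s ^ 2)).const_add s)).deriv]; ring
  have d4 : deriv (fun t => (3 * s ^ 2 * t + s ^ 3 * t ^ 3) * Real.exp (s * t ^ 2 / 2)) 0 =
      3 * s ^ 2 := by
    rw [(hmul (p := fun t => 3 * s ^ 2 * t + s ^ 3 * t ^ 3)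
      (((hasDerivAt_id' 0).const_mul _).add ((hasDerivAt_pow 3 0).const_mul _))).deriv]
    simp
  simp only [iteratedDeriv_succ, iteratedDeriv_zero, d1, d2, d3, d4]

lemma zero_mem_interior_integrableExpSet_of_map_eq_gaussianReal {Ω : Type*} [MeasurableSpace Ω]
    {P : Measure Ω} [IsProbabilityMeasure P] {Z : Ω → ℝ} {μ : ℝ} {s : ℝ≥0}
    (hZ : P.map Z = gaussianReal μ s) : 0 ∈ interior (integrableExpSet Z P) := by
  rw [integrableExpSet_eq_of_mgf (μ' := gaussianReal μ s) (Y := id)]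
  · simp
  · ext t; rw [mgf_gaussianReal hZ, mgf_id_gaussianReal]

lemma integral_pow_four_of_map_eq_gaussianReal {Ω : Type*} [MeasurableSpace Ω]
    {P : Measure Ω} [IsProbabilityMeasure P] {Z : Ω → ℝ} {s : ℝ≥0}
    (hZ : P.map Z = gaussianReal 0 s) : ∫ ω, Z ω ^ 4 ∂P = 3 * (s : ℝ) ^ 2 := by
  have hmgf : mgf Z P = fun t => Real.exp (s * t ^ 2 / 2) := by
    ext t; rw [mgf_gaussianReal hZ]; simp
  have h := iteratedDeriv_mgf_zero (zero_mem_interior_integrableExpSet_of_map_eq_gaussianReal hZ) 4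
  rw [hmgf, iteratedDeriv_four_exp_mul_sq_div_two] at h
  simpa using h.symm

section DotProduct
variable {n : Type*} [Fintype n]

lemma sq_dotProduct_le (a b : n → ℝ) : (a ⬝ᵥ b) ^ 2 ≤ (a ⬝ᵥ a) * (b ⬝ᵥ b) := by
  simpa [dotProduct, sq] using Finset.sum_mul_sq_le_sq_mul_sq Finset.univ a b

lemma dotProduct_self_nonneg (a : n → ℝ) : 0 ≤ a ⬝ᵥ a := by
  simpa using dotProduct_self_star_nonneg a

lemma sub_dotProduct_sub_self_le (a b : n → ℝ) :
    (a - b) ⬝ᵥ (a - b) ≤ 2 * (a ⬝ᵥ a) + 2 * (b ⬝ᵥ b) := by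
  have := dotProduct_self_nonneg (a + b)
  simp only [add_dotProduct, dotProduct_add, sub_dotProduct, dotProduct_sub] at this ⊢
  rw [dotProduct_comm b a] at this ⊢
  linarith

lemma dotProduct_self_eq_sum_sq [DecidableEq n] (x : n → ℝ) :
    x ⬝ᵥ x = ∑ i, (Pi.single i 1 ⬝ᵥ x) ^ 2 := by
  simp_rw [single_dotProduct, one_mul]
  simp [dotProduct, sq]

lemma dotProduct_sq_mul_sq (a b x : n → ℝ) :
    (a ⬝ᵥ x) ^ 2 * (b ⬝ᵥ x) ^ 2 =
      (((a + b) ⬝ᵥ x) ^ 4 + ((a - b) ⬝ᵥ x) ^ 4 - 2 * (a ⬝ᵥ x) ^ 4 - 2 * (b ⬝ᵥ x) ^ 4) / 12 := by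
  simp only [add_dotProduct, sub_dotProduct]
  ring

lemma Matrix.IsHermitian.dotProduct_mulVec_comm {S : Matrix n n ℝ} (hS : S.IsHermitian)
    (a b : n → ℝ) : a ⬝ᵥ S *ᵥ b = b ⬝ᵥ S *ᵥ a := by
  rw [dotProduct_mulVec, ← mulVec_transpose, ← conjTranspose_eq_transpose_of_trivial, hS.eq,
    dotProduct_comm]

end DotProduct

section Spiked
variable {n : Type*} [Fintype n] [DecidableEq n]

lemma one_add_smul_vecMulVec_mulVec (c : ℝ) (v a : n → ℝ) :
    (1 + c • vecMulVec v v) *ᵥ a = a + (c * (v ⬝ᵥ a)) • v := by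
  ext i
  simp [add_mulVec, smul_mulVec, vecMulVec_mulVec, mul_assoc]

lemma dotProduct_one_add_smul_vecMulVec_mulVec (c : ℝ) (v a : n → ℝ) :
    a ⬝ᵥ (1 + c • vecMulVec v v) *ᵥ a = a ⬝ᵥ a + c * (v ⬝ᵥ a) ^ 2 := by
  rw [one_add_smul_vecMulVec_mulVec, dotProduct_add, dotProduct_smul, smul_eq_mul,
    dotProduct_comm a v]
  ring

lemma one_add_smul_vecMulVec_mulVec_dotProduct_self (c : ℝ) (v a : n → ℝ) :
    ((1 + c • vecMulVec v v) *ᵥ a) ⬝ᵥ ((1 + c • vecMulVec v v) *ᵥ a) =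
      a ⬝ᵥ a + (2 * c + c ^ 2 * (v ⬝ᵥ v)) * (v ⬝ᵥ a) ^ 2 := by
  rw [one_add_smul_vecMulVec_mulVec]
  simp only [add_dotProduct, dotProduct_add, smul_dotProduct, dotProduct_smul, smul_eq_mul]
  rw [dotProduct_comm a v]
  ring

lemma trace_one_add_smul_vecMulVec (c : ℝ) (v : n → ℝ) :
    trace (1 + c • vecMulVec v v) = Fintype.card n + c * (v ⬝ᵥ v) := by
  simp [trace_add, trace_smul, trace_vecMulVec]

lemma posSemidef_one_add_smul_vecMulVec {c : ℝ} (hc : 0 ≤ c) (v : n → ℝ) :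
    (1 + c • vecMulVec v v).PosSemidef := by
  simpa using PosSemidef.one.add ((posSemidef_vecMulVec_self_star v).smul hc)

lemma dotProduct_one_add_smul_vecMulVec_mulVec_le {c : ℝ} (hc : 0 ≤ c) {v : n → ℝ}
    (hv : v ⬝ᵥ v = 1) (a : n → ℝ) :
    a ⬝ᵥ (1 + c • vecMulVec v v) *ᵥ a ≤ (1 + c) * (a ⬝ᵥ a) := by
  have hva : (v ⬝ᵥ a) ^ 2 ≤ a ⬝ᵥ a := by simpa [hv] using sq_dotProduct_le v a
  rw [dotProduct_one_add_smul_vecMulVec_mulVec]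
  nlinarith

lemma one_add_smul_vecMulVec_mulVec_dotProduct_self_le {c : ℝ} (hc : 0 ≤ c) {v : n → ℝ}
    (hv : v ⬝ᵥ v = 1) (a : n → ℝ) :
    ((1 + c • vecMulVec v v) *ᵥ a) ⬝ᵥ ((1 + c • vecMulVec v v) *ᵥ a) ≤
      (1 + c) ^ 2 * (a ⬝ᵥ a) := by
  have hva : (v ⬝ᵥ a) ^ 2 ≤ a ⬝ᵥ a := by simpa [hv] using sq_dotProduct_le v a
  rw [one_add_smul_vecMulVec_mulVec_dotProduct_self, hv]
  nlinarith

end Spiked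

namespace IsCenteredGaussianVec
variable {Ω : Type*} [MeasurableSpace Ω] {P : Measure Ω} [IsProbabilityMeasure P] {d : ℕ}
  {S : Matrix (Fin d) (Fin d) ℝ} {X : Ω → Fin d → ℝ}

lemma integrable_dotProduct_pow_four (hX : IsCenteredGaussianVec P S X) (a : Fin d → ℝ) :
    Integrable (fun ω => (a ⬝ᵥ X ω) ^ 4) P :=
  integrable_pow_of_mem_interior_integrableExpSet
    (zero_mem_interior_integrableExpSet_of_map_eq_gaussianReal (hX.2 a)) 4

lemma integral_dotProduct_pow_four (hX : IsCenteredGaussianVec P S X) (hS : S.PosSemidef)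
    (a : Fin d → ℝ) : ∫ ω, (a ⬝ᵥ X ω) ^ 4 ∂P = 3 * (a ⬝ᵥ S *ᵥ a) ^ 2 := by
  rw [integral_pow_four_of_map_eq_gaussianReal (hX.2 a),
    Real.coe_toNNReal _ (by simpa using hS.dotProduct_mulVec_nonneg a)]

lemma integrable_sq_mul_sq (hX : IsCenteredGaussianVec P S X) (a b : Fin d → ℝ) :
    Integrable (fun ω => (a ⬝ᵥ X ω) ^ 2 * (b ⬝ᵥ X ω) ^ 2) P := by
  have I := hX.integrable_dotProduct_pow_four
  simp_rw [dotProduct_sq_mul_sq a b]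
  exact ((((I _).add (I _)).sub ((I _).const_mul 2)).sub ((I _).const_mul 2)).div_const 12

lemma integral_sq_mul_sq (hX : IsCenteredGaussianVec P S X) (hS : S.PosSemidef)
    (a b : Fin d → ℝ) :
    ∫ ω, (a ⬝ᵥ X ω) ^ 2 * (b ⬝ᵥ X ω) ^ 2 ∂P =
      (a ⬝ᵥ S *ᵥ a) * (b ⬝ᵥ S *ᵥ b) + 2 * (a ⬝ᵥ S *ᵥ b) ^ 2 := by
  have I := hX.integrable_dotProduct_pow_four
  simp_rw [dotProduct_sq_mul_sq a b]
  rw [integral_div, integral_sub, integral_sub, integral_add, integral_const_mul,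
    integral_const_mul]
  · simp only [hX.integral_dotProduct_pow_four hS]
    simp only [mulVec_add, mulVec_sub, add_dotProduct, sub_dotProduct, dotProduct_add,
      dotProduct_sub, hS.isHermitian.dotProduct_mulVec_comm b a]
    ring
  all_goals fun_prop (disch := exact I _)

lemma integrable_sq_mul_dotProduct_self (hX : IsCenteredGaussianVec P S X) (a : Fin d → ℝ) :
    Integrable (fun ω => (a ⬝ᵥ X ω) ^ 2 * (X ω ⬝ᵥ X ω)) P := by
  simp_rw [dotProduct_self_eq_sum_sq, Finset.mul_sum]
  exact integrable_finsetSum _ fun i _ => hX.integrable_sq_mul_sq a _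

lemma integral_sq_mul_dotProduct_self (hX : IsCenteredGaussianVec P S X) (hS : S.PosSemidef)
    (a : Fin d → ℝ) :
    ∫ ω, (a ⬝ᵥ X ω) ^ 2 * (X ω ⬝ᵥ X ω) ∂P =
      (a ⬝ᵥ S *ᵥ a) * trace S + 2 * ((S *ᵥ a) ⬝ᵥ (S *ᵥ a)) := by
  simp_rw [dotProduct_self_eq_sum_sq, Finset.mul_sum]
  rw [integral_finsetSum _ fun i _ => hX.integrable_sq_mul_sq a _]
  simp only [hX.integral_sq_mul_sq hS]
  simp only [hS.isHermitian.dotProduct_mulVec_comm a,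
    single_dotProduct, one_mul, Finset.sum_add_distrib, ← Finset.mul_sum, trace]
  simp [dotProduct, sq]

end IsCenteredGaussianVec

lemma sq_sub_mul_deriv_le {f : ℝ → ℝ} (hf : Differentiable ℝ f) {M : ℝ}
    (hM : ∀ x, |deriv f x| ≤ M) (p r : ℝ) :
    ((f p - f r) * deriv f p) ^ 2 ≤ M ^ 4 * (p - r) ^ 2 := by
  have hlip : |f p - f r| ≤ M * |p - r| := by
    simpa only [Real.norm_eq_abs] using Convex.norm_image_sub_le_of_norm_deriv_le
      (fun x _ => hf x) (fun x _ => (Real.norm_eq_abs _).trans_le (hM x)) convex_univ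
      (Set.mem_univ r) (Set.mem_univ p)
  have hM0 : 0 ≤ M := (abs_nonneg _).trans (hM 0)
  calc ((f p - f r) * deriv f p) ^ 2 = (|f p - f r| * |deriv f p|) ^ 2 := by
        rw [← abs_mul, sq_abs]
    _ ≤ (M * |p - r| * M) ^ 2 := by gcongr; exact hM p
    _ = M ^ 4 * (p - r) ^ 2 := by rw [← sq_abs (p - r)]; ring

/-- Explicit second-moment bound on the stochastic gradient
`g = (f(⟨w,x⟩) − f(⟨v_weak,x⟩)) f'(⟨w,x⟩) x` under spiked Gaussian data
`x ~ N(0, I + λvvᵀ)`: `E[‖g‖²] ≤ M₁⁴ (4d(1+λ) + 4λ(1+λ) + 8(1+λ)²)`. -/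
theorem stmt7 {Ω : Type*} [MeasurableSpace Ω] (P : Measure Ω) [IsProbabilityMeasure P]
    {d : ℕ} (lam : ℝ) (hlam : 0 ≤ lam)
    (v : Fin d → ℝ) (hv : v ⬝ᵥ v = 1)
    (S : Matrix (Fin d) (Fin d) ℝ) (hS : S = 1 + lam • vecMulVec v v)
    (X : Ω → Fin d → ℝ) (hX : IsCenteredGaussianVec P S X)
    (w vweak : Fin d → ℝ) (hw : w ⬝ᵥ w = 1) (hvw : vweak ⬝ᵥ vweak = 1)
    (f : ℝ → ℝ) (hf : Differentiable ℝ f) (M₁ : ℝ) (hM₁ : ∀ x, |deriv f x| ≤ M₁) :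
    ∫ ω, ((f (w ⬝ᵥ X ω) - f (vweak ⬝ᵥ X ω)) * deriv f (w ⬝ᵥ X ω)) ^ 2 *
        (X ω ⬝ᵥ X ω) ∂P ≤
      M₁ ^ 4 * (4 * d * (1 + lam) + 4 * lam * (1 + lam) + 8 * (1 + lam) ^ 2) := by
  have hSpsd : S.PosSemidef := hS ▸ posSemidef_one_add_smul_vecMulVec hlam v
  set u := w - vweak
  have hu : u ⬝ᵥ u ≤ 4 := by linarith [sub_dotProduct_sub_self_le w vweak]
  have hpointwise (ω : Ω) :
      ((f (w ⬝ᵥ X ω) - f (vweak ⬝ᵥ X ω)) * deriv f (w ⬝ᵥ X ω)) ^ 2 * (X ω ⬝ᵥ X ω) ≤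
        M₁ ^ 4 * ((u ⬝ᵥ X ω) ^ 2 * (X ω ⬝ᵥ X ω)) := by
    rw [← mul_assoc, sub_dotProduct]
    exact mul_le_mul_of_nonneg_right (sq_sub_mul_deriv_le hf hM₁ _ _) (dotProduct_self_nonneg _)
  calc _ ≤ ∫ ω, M₁ ^ 4 * ((u ⬝ᵥ X ω) ^ 2 * (X ω ⬝ᵥ X ω)) ∂P :=
        integral_mono_of_nonneg
          (ae_of_all _ fun ω => mul_nonneg (sq_nonneg _) (dotProduct_self_nonneg _))
          ((hX.integrable_sq_mul_dotProduct_self u).const_mul _) (ae_of_all _ hpointwise)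
    _ = M₁ ^ 4 * ((u ⬝ᵥ S *ᵥ u) * (d + lam) + 2 * ((S *ᵥ u) ⬝ᵥ (S *ᵥ u))) := by
        rw [integral_const_mul, hX.integral_sq_mul_dotProduct_self hSpsd, hS,
          trace_one_add_smul_vecMulVec, hv, Fintype.card_fin, mul_one]
    _ ≤ M₁ ^ 4 * ((1 + lam) * 4 * (d + lam) + 2 * ((1 + lam) ^ 2 * 4)) := by
        have hq := (dotProduct_one_add_smul_vecMulVec_mulVec_le hlam hv u).trans
          (by gcongr : (1 + lam) * (u ⬝ᵥ u) ≤ (1 + lam) * 4)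
        have hSu := (one_add_smul_vecMulVec_mulVec_dotProduct_self_le hlam hv u).trans
          (by gcongr : (1 + lam) ^ 2 * (u ⬝ᵥ u) ≤ (1 + lam) ^ 2 * 4)
        rw [hS]
        gcongr
    _ = _ := by ring
end

section
/- There exists a constant c > 0 such that the following holds in any real inner product space: for every w with ‖w‖ = 1, every vector g, and every η > 0 with η‖g‖ ≤ c, the vector u := w − η g is nonzero, and the normalized update w' := u/‖u‖ admits the decomposition w' = w − η·(g − ⟨w, g⟩·w) + e, where the residual e := w' − w + η(g − ⟨w,g⟩w) satisfies ‖e‖ ≤ 3·η²·‖g‖². -/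
open scoped RealInnerProductSpace

/-!
Write `u = w - η • g`, `r = ‖u‖`, `b = η ⟪w, g⟫` and `t = η ‖g‖`, so that `|b| ≤ t` and
`r² = 1 - 2b + t²`. The residual is `(r⁻¹ - 1 - b) • u - (η b) • g`, of norm at most
`|1 - r - b r| + |b| t`. Expanding `r = √(1 - 2b + t²)` to second order gives
`1 - r - b r ≈ (3b² - t²)/2`, so both terms are `O(t²)` once `t` is small.
-/

section Scalar

variable {r b t : ℝ}

theorem one_sub_le_of_sq_eq (hr : 0 ≤ r) (hsq : r ^ 2 = 1 - 2 * b + t ^ 2) (hb : |b| ≤ t) :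
    1 - t ≤ r := by
  nlinarith [(abs_le.mp hb).2, sq_nonneg (r - (1 - t))]

theorem abs_one_sub_sub_mul_le (hr : 0 ≤ r) (hsq : r ^ 2 = 1 - 2 * b + t ^ 2) (hb : |b| ≤ t)
    (ht : t ≤ 1 / 10) : |1 - r - b * r| ≤ 2 * t ^ 2 := by
  obtain ⟨hb₁, hb₂⟩ := abs_le.mp hb
  have hr₁ : 1 - t ≤ r := one_sub_le_of_sq_eq hr hsq hb
  have hr₂ : r ≤ 1 + t := by nlinarith [sq_nonneg (r - (1 + t))]
  -- `(1 - r)(1 + r) = 2b - t²` turns the deviation into something explicit in `b`, `t`, `r`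
  have key : (1 - r - b * r) * (1 + r) = b * (1 - r) * (2 + r) - t ^ 2 := by
    linear_combination -hsq
  rw [abs_le]
  constructor <;> nlinarith [mul_nonneg (sub_nonneg.mpr hb₂) (sub_nonneg.mpr hr₂),
    mul_nonneg (neg_le_iff_add_nonneg.mp hb₁) (sub_nonneg.mpr hr₂),
    mul_nonneg (sub_nonneg.mpr hb₂) (sub_nonneg.mpr hr₁),
    mul_nonneg (neg_le_iff_add_nonneg.mp hb₁) (sub_nonneg.mpr hr₁)]

end Scalar

section InnerProductSpace

variable {E : Type*} [NormedAddCommGroup E] [InnerProductSpace ℝ E]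

theorem norm_sub_smul_sq_of_norm_eq_one {w : E} (hw : ‖w‖ = 1) (η : ℝ) (g : E) :
    ‖w - η • g‖ ^ 2 = 1 - 2 * (η * ⟪w, g⟫) + (η * ‖g‖) ^ 2 := by
  rw [norm_sub_sq_real, real_inner_smul_right, norm_smul, hw, Real.norm_eq_abs, mul_pow,
    mul_pow, sq_abs]
  ring

theorem abs_mul_inner_le_of_norm_eq_one {w : E} (hw : ‖w‖ = 1) {η : ℝ} (hη : 0 ≤ η) (g : E) :
    |η * ⟪w, g⟫| ≤ η * ‖g‖ := by
  rw [abs_mul, abs_of_nonneg hη]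
  gcongr
  simpa [hw] using abs_real_inner_le_norm w g

theorem norm_normalize_sub_tangent_step_le {w g : E} {η : ℝ} (hη : 0 ≤ η)
    (hu : w - η • g ≠ 0) :
    ‖‖w - η • g‖⁻¹ • (w - η • g) - w + η • (g - ⟪w, g⟫ • w)‖ ≤
      |1 - ‖w - η • g‖ - η * ⟪w, g⟫ * ‖w - η • g‖| + |η * ⟪w, g⟫| * (η * ‖g‖) := by
  set r := ‖w - η • g‖
  have hr : 0 < r := norm_pos_iff.mpr hu
  have hresidual : r⁻¹ • (w - η • g) - w + η • (g - ⟪w, g⟫ • w) =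
      (r⁻¹ - 1 - η * ⟪w, g⟫) • (w - η • g) - (η * (η * ⟪w, g⟫)) • g := by
    module
  have hscale : |r⁻¹ - 1 - η * ⟪w, g⟫| * r = |1 - r - η * ⟪w, g⟫ * r| := by
    rw [← abs_of_pos hr, ← abs_mul, abs_of_pos hr]
    congr 1
    field_simp
  calc ‖r⁻¹ • (w - η • g) - w + η • (g - ⟪w, g⟫ • w)‖
      ≤ |r⁻¹ - 1 - η * ⟪w, g⟫| * r + |η * (η * ⟪w, g⟫)| * ‖g‖ := by
        rw [hresidual]
        refine (norm_sub_le _ _).trans_eq ?_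
        rw [norm_smul, norm_smul, Real.norm_eq_abs, Real.norm_eq_abs]
    _ = |1 - r - η * ⟪w, g⟫ * r| + |η * ⟪w, g⟫| * (η * ‖g‖) := by
        rw [hscale, abs_mul η, abs_of_nonneg hη]
        ring

end InnerProductSpace

/-- Spherical projection adjustment: there is a universal constant `c > 0` such that in
any real inner product space, for a unit vector `w` and a step with `η‖g‖ ≤ c`, the
vector `u = w − ηg` is nonzero and its normalization `w' = u/‖u‖` equals
`w − η(g − ⟨w,g⟩w) + e` with the residual `e` satisfying `‖e‖ ≤ 3η²‖g‖²`. -/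
theorem stmt8 : ∃ c : ℝ, 0 < c ∧
    ∀ (E : Type) [NormedAddCommGroup E] [InnerProductSpace ℝ E]
      (w g : E) (η : ℝ), ‖w‖ = 1 → 0 < η → η * ‖g‖ ≤ c →
      w - η • g ≠ 0 ∧
        ‖(‖w - η • g‖⁻¹ • (w - η • g)) - w + η • (g - ⟪w, g⟫ • w)‖ ≤
          3 * η ^ 2 * ‖g‖ ^ 2 := by
  refine ⟨1 / 10, by norm_num, fun E _ _ w g η hw hη hc => ?_⟩
  have hb := abs_mul_inner_le_of_norm_eq_one hw hη.le g
  have hsq := norm_sub_smul_sq_of_norm_eq_one hw η g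
  have hu : w - η • g ≠ 0 := by
    rw [← norm_pos_iff]
    linarith [one_sub_le_of_sq_eq (norm_nonneg _) hsq hb]
  refine ⟨hu, (norm_normalize_sub_tangent_step_le hη.le hu).trans ?_⟩
  have hdev := abs_one_sub_sub_mul_le (norm_nonneg _) hsq hb hc
  nlinarith [mul_le_mul_of_nonneg_right hb (mul_nonneg hη.le (norm_nonneg g))]
end

section
/- Let w, v⋆, w' be unit vectors in a real inner product space, let g be a vector, η > 0, and suppose w' = w − η·(g − ⟨w, g⟩·w) + e with ‖e‖ ≤ 3·η²·‖g‖². Then, writing Δ = ‖w − v⋆‖² and Δ' = ‖w' − v⋆‖²: Δ' ≤ Δ − 2η·⟨g, w − v⋆⟩ + η·Δ·⟨w, g⟩ + 7·η²·‖g‖². -/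
open scoped RealInnerProductSpace

/-- Single-step distance recursion for spherical projected gradient descent:
if `w' = w − η(g − ⟨w,g⟩w) + e` with `‖e‖ ≤ 3η²‖g‖²` and `w, v⋆, w'` are unit vectors,
then `Δ' ≤ Δ − 2η⟨g, w − v⋆⟩ + ηΔ⟨w,g⟩ + 7η²‖g‖²` where `Δ = ‖w − v⋆‖²`, `Δ' = ‖w' − v⋆‖²`. -/
theorem stmt9 {E : Type*} [NormedAddCommGroup E] [InnerProductSpace ℝ E]
    (w vstar w' g e : E) (η : ℝ) (hη : 0 < η)
    (hw : ‖w‖ = 1) (hvs : ‖vstar‖ = 1) (hw' : ‖w'‖ = 1)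
    (hupd : w' = w - η • (g - ⟪w, g⟫ • w) + e)
    (he : ‖e‖ ≤ 3 * η ^ 2 * ‖g‖ ^ 2) :
    ‖w' - vstar‖ ^ 2 ≤ ‖w - vstar‖ ^ 2 - 2 * η * ⟪g, w - vstar⟫ +
      η * ‖w - vstar‖ ^ 2 * ⟪w, g⟫ + 7 * η ^ 2 * ‖g‖ ^ 2 := by
  have h1 : ‖w' - vstar‖ ^ 2 = 2 - 2 * ⟪w', vstar⟫ := by
    rw [norm_sub_sq_real, hw', hvs]; ring
  have h2 : ‖w - vstar‖ ^ 2 = 2 - 2 * ⟪w, vstar⟫ := by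
    rw [norm_sub_sq_real, hw, hvs]; ring
  have h3 : ⟪w', vstar⟫ = ⟪w, vstar⟫ - η * ⟪g, vstar⟫ + η * ⟪w, g⟫ * ⟪w, vstar⟫
      + ⟪e, vstar⟫ := by
    rw [hupd]
    simp [inner_add_left, inner_sub_left, inner_smul_left, real_inner_smul_left]
    ring
  have h4 : ⟪g, w - vstar⟫ = ⟪g, w⟫ - ⟪g, vstar⟫ := by rw [inner_sub_right]
  have h5 : ⟪g, w⟫ = ⟪w, g⟫ := real_inner_comm w g
  have h6 : -⟪e, vstar⟫ ≤ ‖e‖ := by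
    calc -⟪e, vstar⟫ ≤ |⟪e, vstar⟫| := neg_le_abs _
    _ ≤ ‖e‖ * ‖vstar‖ := abs_real_inner_le_norm e vstar
    _ = ‖e‖ := by rw [hvs, mul_one]
  rw [h1, h2, h3, h4, h5]
  nlinarith [h6, he, sq_nonneg (η * ‖g‖), mul_pos hη hη]
end

section
/- Let λ ≥ 0, let v ∈ ℝ^d be a unit vector, set Σ = I_d + λ v vᵀ, and let x ~ N(0, Σ). Let f : ℝ → ℝ be differentiable with |f'| ≤ M₁ on ℝ. Then for all unit vectors w, v⋆ ∈ ℝ^d: | E[ (f(⟨w,x⟩) − f(⟨v⋆,x⟩))·f'(⟨w,x⟩)·⟨w,x⟩ ] | ≤ M₁²·(1+λ)·‖w − v⋆‖. -/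
/-! The mean value theorem gives `|f a - f b| ≤ M₁ |a - b|`, so the integrand is dominated by
`M₁² |⟨w - v⋆, x⟩| |⟨w, x⟩|`, whose expectation Cauchy–Schwarz bounds by the product of the
standard deviations of `⟨w - v⋆, x⟩` and `⟨w, x⟩`. In any direction `u` the variance
`uᵀΣu = ‖u‖² + λ⟨v, u⟩²` is at most `(1 + λ)‖u‖²`. -/

open MeasureTheory ProbabilityTheory Matrix

theorem integral_abs_mul_le_sqrt_mul_sqrt {α : Type*} [MeasurableSpace α] {μ : Measure α}
    {f g : α → ℝ} (hf : MemLp f 2 μ) (hg : MemLp g 2 μ) :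
    ∫ a, |f a| * |g a| ∂μ ≤ √(∫ a, f a ^ 2 ∂μ) * √(∫ a, g a ^ 2 ∂μ) := by
  have h := integral_mul_norm_le_Lp_mul_Lq (μ := μ) Real.HolderConjugate.two_two
    (by simpa using hf) (by simpa using hg)
  simpa only [Real.norm_eq_abs, Real.rpow_two, sq_abs, ← Real.sqrt_eq_rpow] using h

theorem abs_sub_le_of_abs_deriv_le {f : ℝ → ℝ} {M : ℝ} (hf : Differentiable ℝ f)
    (hM : ∀ x, |deriv f x| ≤ M) (a b : ℝ) : |f a - f b| ≤ M * |a - b| :=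
  Convex.norm_image_sub_le_of_norm_deriv_le (fun x _ => hf x) (fun x _ => hM x)
    convex_univ (Set.mem_univ b) (Set.mem_univ a)

theorem abs_sub_mul_deriv_mul_le {f : ℝ → ℝ} {M : ℝ} (hf : Differentiable ℝ f)
    (hM : ∀ x, |deriv f x| ≤ M) (y z : ℝ) :
    |(f y - f z) * deriv f y * y| ≤ M ^ 2 * (|y - z| * |y|) := by
  have hM₀ : 0 ≤ M := (abs_nonneg _).trans (hM 0)
  calc |(f y - f z) * deriv f y * y|
      = |f y - f z| * |deriv f y| * |y| := by rw [abs_mul, abs_mul]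
    _ ≤ (M * |y - z|) * M * |y| := by
        gcongr
        exacts [abs_sub_le_of_abs_deriv_le hf hM y z, hM y]
    _ = M ^ 2 * (|y - z| * |y|) := by ring

theorem abs_integral_sub_mul_deriv_mul_le {Ω : Type*} [MeasurableSpace Ω] {P : Measure Ω}
    {f : ℝ → ℝ} {M : ℝ} (hf : Differentiable ℝ f) (hM : ∀ x, |deriv f x| ≤ M)
    {Y Z : Ω → ℝ} (hY : MemLp Y 2 P) (hZ : MemLp Z 2 P) :
    |∫ ω, (f (Y ω) - f (Z ω)) * deriv f (Y ω) * Y ω ∂P| ≤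
      M ^ 2 * (√(∫ ω, (Y ω - Z ω) ^ 2 ∂P) * √(∫ ω, Y ω ^ 2 ∂P)) := by
  have hint : Integrable (fun ω => |Y ω - Z ω| * |Y ω|) P :=
    (hY.sub hZ).abs.integrable_mul hY.abs
  calc |∫ ω, (f (Y ω) - f (Z ω)) * deriv f (Y ω) * Y ω ∂P|
      ≤ ∫ ω, |(f (Y ω) - f (Z ω)) * deriv f (Y ω) * Y ω| ∂P := abs_integral_le_integral_abs
    _ ≤ ∫ ω, M ^ 2 * (|Y ω - Z ω| * |Y ω|) ∂P :=
        integral_mono_of_nonneg (Filter.Eventually.of_forall fun _ => abs_nonneg _)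
          (hint.const_mul _)
          (Filter.Eventually.of_forall fun ω => abs_sub_mul_deriv_mul_le hf hM _ _)
    _ = M ^ 2 * ∫ ω, |Y ω - Z ω| * |Y ω| ∂P := integral_const_mul _ _
    _ ≤ M ^ 2 * (√(∫ ω, (Y ω - Z ω) ^ 2 ∂P) * √(∫ ω, Y ω ^ 2 ∂P)) := by
        gcongr
        exact integral_abs_mul_le_sqrt_mul_sqrt (hY.sub hZ) hY

theorem integral_sq_gaussianReal_zero (σ : NNReal) : ∫ x, x ^ 2 ∂gaussianReal 0 σ = σ := by
  rw [← variance_of_integral_eq_zero (X := fun x => x) aemeasurable_id integral_id_gaussianReal]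
  exact variance_fun_id_gaussianReal

namespace IsCenteredGaussianVec

variable {Ω : Type*} [MeasurableSpace Ω] {P : Measure Ω} {d : ℕ}
  {S : Matrix (Fin d) (Fin d) ℝ} {X : Ω → Fin d → ℝ}

theorem measurable_dotProduct (hX : IsCenteredGaussianVec P S X) (u : Fin d → ℝ) :
    Measurable fun ω => u ⬝ᵥ X ω :=
  Finset.measurable_sum _ fun i _ => measurable_const.mul ((measurable_pi_apply i).comp hX.1)

theorem memLp_dotProduct (hX : IsCenteredGaussianVec P S X) (u : Fin d → ℝ) :
    MemLp (fun ω => u ⬝ᵥ X ω) 2 P := by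
  have h : MemLp id 2 (P.map fun ω => u ⬝ᵥ X ω) := by
    rw [hX.2 u]; exact memLp_id_gaussianReal 2
  exact (memLp_map_measure_iff aestronglyMeasurable_id
    (hX.measurable_dotProduct u).aemeasurable).1 h

theorem integral_dotProduct_sq (hX : IsCenteredGaussianVec P S X) (u : Fin d → ℝ) :
    ∫ ω, (u ⬝ᵥ X ω) ^ 2 ∂P = (u ⬝ᵥ S *ᵥ u).toNNReal := by
  rw [← integral_sq_gaussianReal_zero, ← hX.2 u,
    integral_map (hX.measurable_dotProduct u).aemeasurable (by fun_prop)]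

end IsCenteredGaussianVec

theorem dotProduct_spiked_mulVec {d : ℕ} (lam : ℝ) (v u : Fin d → ℝ) :
    u ⬝ᵥ (1 + lam • vecMulVec v v) *ᵥ u = u ⬝ᵥ u + lam * (v ⬝ᵥ u) ^ 2 := by
  rw [add_mulVec, one_mulVec, smul_mulVec, dotProduct_add, dotProduct_smul,
    vecMulVec_mulVec, dotProduct_smul, smul_eq_mul, op_smul_eq_mul, dotProduct_comm u v]
  ring

theorem dotProduct_spiked_mulVec_le {d : ℕ} {lam : ℝ} (hlam : 0 ≤ lam) {v : Fin d → ℝ}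
    (hv : v ⬝ᵥ v = 1) (u : Fin d → ℝ) :
    u ⬝ᵥ (1 + lam • vecMulVec v v) *ᵥ u ≤ (1 + lam) * (u ⬝ᵥ u) := by
  have hcs : (v ⬝ᵥ u) ^ 2 ≤ (v ⬝ᵥ v) * (u ⬝ᵥ u) := by
    simpa only [dotProduct, sq] using Finset.sum_mul_sq_le_sq_mul_sq Finset.univ v u
  rw [hv, one_mul] at hcs
  rw [dotProduct_spiked_mulVec]
  nlinarith

theorem stmt15_general {Ω : Type*} [MeasurableSpace Ω] (P : Measure Ω)
    {d : ℕ} (lam : ℝ) (hlam : 0 ≤ lam)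
    (v : Fin d → ℝ) (hv : v ⬝ᵥ v = 1)
    (S : Matrix (Fin d) (Fin d) ℝ) (hS : S = 1 + lam • vecMulVec v v)
    (X : Ω → Fin d → ℝ) (hX : IsCenteredGaussianVec P S X)
    (f : ℝ → ℝ) (hf : Differentiable ℝ f) (M₁ : ℝ) (hM₁ : ∀ x, |deriv f x| ≤ M₁)
    (w vstar : Fin d → ℝ) (hw : w ⬝ᵥ w = 1) :
    |∫ ω, (f (w ⬝ᵥ X ω) - f (vstar ⬝ᵥ X ω)) * deriv f (w ⬝ᵥ X ω) * (w ⬝ᵥ X ω) ∂P| ≤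
      M₁ ^ 2 * (1 + lam) * Real.sqrt ((w - vstar) ⬝ᵥ (w - vstar)) := by
  have hsecond_moment (u : Fin d → ℝ) : ∫ ω, (u ⬝ᵥ X ω) ^ 2 ∂P ≤ (1 + lam) * (u ⬝ᵥ u) := by
    rw [hX.integral_dotProduct_sq, Real.coe_toNNReal', hS]
    exact max_le (dotProduct_spiked_mulVec_le hlam hv u)
      (mul_nonneg (by linarith) (dotProduct_star_self_nonneg u))
  have hdiff : ∀ ω, w ⬝ᵥ X ω - vstar ⬝ᵥ X ω = (w - vstar) ⬝ᵥ X ω :=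
    fun ω => (sub_dotProduct _ _ _).symm
  calc _ ≤ M₁ ^ 2 * (√(∫ ω, ((w - vstar) ⬝ᵥ X ω) ^ 2 ∂P) * √(∫ ω, (w ⬝ᵥ X ω) ^ 2 ∂P)) := by
        simpa only [hdiff] using abs_integral_sub_mul_deriv_mul_le hf hM₁
          (hX.memLp_dotProduct w) (hX.memLp_dotProduct vstar)
    _ ≤ M₁ ^ 2 * (√((1 + lam) * ((w - vstar) ⬝ᵥ (w - vstar))) * √((1 + lam) * (w ⬝ᵥ w))) := by
        gcongr <;> exact hsecond_moment _
    _ = M₁ ^ 2 * (1 + lam) * √((w - vstar) ⬝ᵥ (w - vstar)) := by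
        rw [hw, mul_one, Real.sqrt_mul (by linarith), mul_right_comm,
          Real.mul_self_sqrt (by linarith), mul_assoc]

/-- Radial drift bound: for spiked Gaussian data `x ~ N(0, I + λvvᵀ)` and unit `w, v⋆`,
`|E[(f(⟨w,x⟩) − f(⟨v⋆,x⟩)) f'(⟨w,x⟩) ⟨w,x⟩]| ≤ M₁² (1+λ) ‖w − v⋆‖`. -/
theorem stmt15 {Ω : Type*} [MeasurableSpace Ω] (P : Measure Ω) [IsProbabilityMeasure P]
    {d : ℕ} (lam : ℝ) (hlam : 0 ≤ lam)
    (v : Fin d → ℝ) (hv : v ⬝ᵥ v = 1)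
    (S : Matrix (Fin d) (Fin d) ℝ) (hS : S = 1 + lam • vecMulVec v v)
    (X : Ω → Fin d → ℝ) (hX : IsCenteredGaussianVec P S X)
    (f : ℝ → ℝ) (hf : Differentiable ℝ f) (M₁ : ℝ) (hM₁ : ∀ x, |deriv f x| ≤ M₁)
    (w vstar : Fin d → ℝ) (hw : w ⬝ᵥ w = 1) (hvs : vstar ⬝ᵥ vstar = 1) :
    |∫ ω, (f (w ⬝ᵥ X ω) - f (vstar ⬝ᵥ X ω)) * deriv f (w ⬝ᵥ X ω) * (w ⬝ᵥ X ω) ∂P| ≤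
      M₁ ^ 2 * (1 + lam) * Real.sqrt ((w - vstar) ⬝ᵥ (w - vstar)) :=
  stmt15_general P lam hlam v hv S hS X hX f hf M₁ hM₁ w vstar hw
end

section
/- Let R > 0, ε > 0, ε₀ > 0, a ∈ (0, 1], T ∈ ℕ, and D ∈ ℝ with 0 ≤ D ≤ R − ε. Let (Δ_t)_{t=0}^{T} and (ξ_t)_{t=0}^{T−1} be real sequences with Δ_t ≥ 0 for all t, Δ₀ ≤ R − ε₀, and suppose ν ≥ 0 satisfies ν < min(ε, ε₀) and max_{1 ≤ t ≤ T} | Σ_{j=0}^{t−1} (1 − a)^{t−1−j}·ξ_j | ≤ ν. Assume that for every t < T, if Δ_s ≤ R for all s ≤ t, then Δ_{t+1} ≤ (1 − a)·Δ_t + a·D + ξ_t. Then Δ_t ≤ R − min(ε, ε₀) + ν < R for every t with 1 ≤ t ≤ T; in particular, the trajectory never exceeds R. -/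
/-- Deterministic confinement induction: with `Δ₀ ≤ R − ε₀`, stationary bottleneck
`D ≤ R − ε`, uniformly bounded discounted noise sums `≤ ν < min(ε, ε₀)`, and the
one-step recursion valid as long as the trajectory has stayed in the region `≤ R`,
the trajectory satisfies `Δ_t ≤ R − min(ε,ε₀) + ν < R` for all `1 ≤ t ≤ T`. -/
theorem stmt18 (R ε ε₀ : ℝ) (hR : 0 < R) (hε : 0 < ε) (hε₀ : 0 < ε₀)
    (a : ℝ) (ha0 : 0 < a) (ha1 : a ≤ 1) (T : ℕ)
    (D : ℝ) (hD0 : 0 ≤ D) (hD : D ≤ R - ε)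
    (Δ ξ : ℕ → ℝ) (hΔ0 : ∀ t, 0 ≤ Δ t) (hΔinit : Δ 0 ≤ R - ε₀)
    (ν : ℝ) (hν0 : 0 ≤ ν) (hν : ν < min ε ε₀)
    (hnoise : ∀ t, 1 ≤ t → t ≤ T →
      |∑ j ∈ Finset.range t, (1 - a) ^ (t - 1 - j) * ξ j| ≤ ν)
    (hrec : ∀ t < T, (∀ s ≤ t, Δ s ≤ R) → Δ (t + 1) ≤ (1 - a) * Δ t + a * D + ξ t) :
    (∀ t, 1 ≤ t → t ≤ T → Δ t ≤ R - min ε ε₀ + ν) ∧ R - min ε ε₀ + ν < R := by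
  have hb0 : (0:ℝ) ≤ 1 - a := by linarith
  have hb1 : (1:ℝ) - a ≤ 1 := by linarith
  have hm0 : 0 < min ε ε₀ := lt_min hε hε₀
  have hconv : ∀ t : ℕ, (1-a) ^ t * Δ 0 + (1 - (1-a) ^ t) * D ≤ R - min ε ε₀ := by
    intro t
    have h1 : (0:ℝ) ≤ (1-a) ^ t := pow_nonneg hb0 t
    have h2 : (1-a) ^ t ≤ 1 := pow_le_one₀ hb0 hb1
    have h3 : Δ 0 ≤ R - min ε ε₀ := by
      have := min_le_right ε ε₀; linarith
    have h4 : D ≤ R - min ε ε₀ := by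
      have := min_le_left ε ε₀; linarith
    nlinarith
  have key : ∀ t, t ≤ T → Δ t ≤ (1-a) ^ t * Δ 0 + (1 - (1-a) ^ t) * D +
      ∑ j ∈ Finset.range t, (1-a) ^ (t - 1 - j) * ξ j := by
    intro t
    induction t using Nat.strong_induction_on with
    | _ t ih =>
      match t with
      | 0 => intro _; simp
      | (t+1) =>
        intro hT
        have ht : t ≤ T := Nat.le_of_succ_le hT
        have conf : ∀ s ≤ t, Δ s ≤ R := by
          intro s hs
          have hsT : s ≤ T := le_trans hs ht
          have hcs := ih s (Nat.lt_succ_of_le hs) hsT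
          rcases Nat.eq_zero_or_pos s with h0 | h1
          · subst h0; linarith
          · have hS := (abs_le.mp (hnoise s h1 hsT)).2
            have := hconv s
            linarith
        have hrec' := hrec t (Nat.lt_of_succ_le hT) conf
        have hIH := ih t (Nat.lt_succ_self t) ht
        have hsum : ∑ j ∈ Finset.range (t+1), (1-a) ^ (t + 1 - 1 - j) * ξ j
            = (1-a) * ∑ j ∈ Finset.range t, (1-a) ^ (t - 1 - j) * ξ j + ξ t := by
          rw [Finset.sum_range_succ, Finset.mul_sum]
          congr 1
          · apply Finset.sum_congr rfl
            intro j hj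
            have hj' : j < t := Finset.mem_range.mp hj
            have he : t + 1 - 1 - j = (t - 1 - j) + 1 := by omega
            rw [he, pow_succ]; ring
          · simp
        rw [hsum]
        have hmul := mul_le_mul_of_nonneg_left hIH hb0
        have hps : (1-a) ^ (t+1) = (1-a) ^ t * (1-a) := pow_succ _ _
        nlinarith [hmul, hps]
  have hlt : R - min ε ε₀ + ν < R := by linarith
  refine ⟨fun t h1 hT => ?_, hlt⟩
  have hk := key t hT
  have hS := (abs_le.mp (hnoise t h1 hT)).2
  have := hconv t
  linarith
end
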